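/- Assume the positivity condition θ_k ∈ (0,π) for all 1 ≤ k ≤ N, ∑_{k=1}^N θ_k = 2π, and N ≥ 5. If sin(φ_k − φ_j) ≠ 0 for all 1 ≤ j < k ≤ N, then Q(λ) > 0 for every λ ∈ Δ̄ with λ ≠ 0. -/

import Mathlib

/-- The cumulative angle `φ_k = ∑_{a=1}^k θ_a`. -/
noncomputable def phiAng (θ : ℕ → ℝ) (k : ℕ) : ℝ := ∑ a ∈ Finset.Icc 1 k, θ a

/-- The signed-area quadratic form `Q` on `ℝ^{N-2}` (coordinates indexed `1,…,N-2`). -/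
noncomputable def Qform (N : ℕ) (θ : ℕ → ℝ) (lam : ℕ → ℝ) : ℝ :=
  -(1/2) * ∑ j ∈ Finset.Icc 1 (N-2),
      Real.sin (phiAng θ N - phiAng θ j) * Real.sin (phiAng θ (N-1) - phiAng θ j)
        / Real.sin (θ N) * (lam j)^2
  - ∑ j ∈ Finset.Icc 1 (N-2), ∑ k ∈ Finset.Icc (j+1) (N-2),
      Real.sin (phiAng θ N - phiAng θ j) * Real.sin (phiAng θ (N-1) - phiAng θ k)
        / Real.sin (θ N) * (lam j * lam k)

/-- The vector `v`, `v_j = -sin(φ_N - φ_j)/sin(θ_N)`. -/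
noncomputable def vvec (N : ℕ) (θ : ℕ → ℝ) (j : ℕ) : ℝ :=
  -(Real.sin (phiAng θ N - phiAng θ j)) / Real.sin (θ N)

/-- The vector `w`, `w_j = sin(φ_{N-1} - φ_j)/sin(θ_N)`. -/
noncomputable def wvec (N : ℕ) (θ : ℕ → ℝ) (j : ℕ) : ℝ :=
  Real.sin (phiAng θ (N-1) - phiAng θ j) / Real.sin (θ N)

/-- The extended side lengths: `λ_k` for `k ≤ N-2`, `λ_{N-1} = vᵀλ`, `λ_N = wᵀλ`. -/
noncomputable def lamExt (N : ℕ) (θ : ℕ → ℝ) (lam : ℕ → ℝ) (k : ℕ) : ℝ :=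
  if k = N - 1 then ∑ j ∈ Finset.Icc 1 (N-2), vvec N θ j * lam j
  else if k = N then ∑ j ∈ Finset.Icc 1 (N-2), wvec N θ j * lam j
  else lam k

/-- Vectors in `ℝ^{N-2}` modelled as functions `ℕ → ℝ` supported on `{1,…,N-2}`. -/
def suppOK (N : ℕ) (lam : ℕ → ℝ) : Prop := ∀ k, k ∉ Finset.Icc 1 (N-2) → lam k = 0

/-- The closed double cone `Δ̄` of vectors with all extended coordinates `≥ 0` or all `≤ 0`. -/
def DeltaBar (N : ℕ) (θ : ℕ → ℝ) : Set (ℕ → ℝ) :=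
  {lam | suppOK N lam ∧
    ((∀ k, 1 ≤ k → k ≤ N → 0 ≤ lamExt N θ lam k) ∨
     (∀ k, 1 ≤ k → k ≤ N → lamExt N θ lam k ≤ 0))}

/-- The isotropic set `D_0 = {λ : Q(λ) = 0}`. -/
def Dzero (N : ℕ) (θ : ℕ → ℝ) : Set (ℕ → ℝ) := {lam | suppOK N lam ∧ Qform N θ lam = 0}

/-- The coordinate subspace `V_I = {λ : λ_j = 0 for j ∈ I}`. -/
def Vface (N : ℕ) (θ : ℕ → ℝ) (I : Finset ℕ) : Set (ℕ → ℝ) :=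
  {lam | suppOK N lam ∧ ∀ j ∈ I, lamExt N θ lam j = 0}

/-- The face `F_I = V_I ∩ Δ̄`. -/
def Fface (N : ℕ) (θ : ℕ → ℝ) (I : Finset ℕ) : Set (ℕ → ℝ) := Vface N θ I ∩ DeltaBar N θ

/-
With `s` the extended side lengths `λ_1, …, λ_N`, `2 Q(λ)` is the signed area
`∑_{j<k} s_j s_k sin(φ_k - φ_j)` of the polygon with sides `s_k e^{iφ_k}`, and `v`, `w` are exactly
what makes this polygon close up. Write the area as `∑_c s_c T_c` with
`T_c = ∑_{k>c} s_k sin(φ_k - φ_c)`. Since all turning angles `φ_k - φ_j` lie in `(0, 2π)`, either no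
later side turns by more than `π` from side `c`, or one does and then every earlier side lies
strictly less than `π` behind side `c`; in the second case closure gives
`T_c = -∑_{j<c} s_j sin(φ_j - φ_c)`. Either way `T_c ≥ 0`. A closed polygon without parallel
sides has at least three sides of positive length, and for a middle one the same dichotomy gives
`T_c > 0`.
-/

open Finset Real

section Sums

variable {M : Type*} [AddCommMonoid M]

theorem sum_Icc_sum_Icc_succ_top (m : ℕ) (f : ℕ → ℕ → M) :
    ∑ j ∈ Icc 1 (m + 1), ∑ k ∈ Icc (j + 1) (m + 1), f j k =
      ∑ j ∈ Icc 1 m, ∑ k ∈ Icc (j + 1) m, f j k + ∑ j ∈ Icc 1 m, f j (m + 1) := by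
  rw [sum_Icc_succ_top (by omega), Icc_eq_empty_of_lt (Nat.lt_succ_self _), sum_empty, add_zero,
    ← sum_add_distrib]
  exact sum_congr rfl fun j hj => sum_Icc_succ_top (by simp only [mem_Icc] at hj; omega) _

theorem sum_Icc_sum_Icc_eq_sum_diag_add (n : ℕ) (f : ℕ → ℕ → M) :
    ∑ j ∈ Icc 1 n, ∑ k ∈ Icc 1 n, f j k =
      ∑ j ∈ Icc 1 n, f j j + ∑ j ∈ Icc 1 n, ∑ k ∈ Icc (j + 1) n, (f j k + f k j) := by
  induction n with
  | zero => simp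
  | succ n ih =>
    rw [sum_Icc_sum_Icc_succ_top, sum_Icc_succ_top (by omega), sum_Icc_succ_top (by omega),
      sum_Icc_succ_top (by omega)]
    simp only [sum_Icc_succ_top (by omega : 1 ≤ n + 1), sum_add_distrib, ih]
    abel

end Sums

-- The sides `s a • (cos (φ a), sin (φ a))` sum to zero: `sin (φ a - t)` is the component of the
-- `a`-th unit side along `(-sin t, cos t)`.
def IsClosedPolygon (m : ℕ) (φ s : ℕ → ℝ) : Prop :=
  ∀ t, ∑ a ∈ Icc 1 m, s a * sin (φ a - t) = 0

noncomputable def tailMoment (m : ℕ) (φ s : ℕ → ℝ) (c : ℕ) : ℝ :=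
  ∑ x ∈ Icc (c + 1) m, s x * sin (φ x - φ c)

-- Twice the signed area of the polygon with sides `s k • (cos (φ k), sin (φ k))` (shoelace).
noncomputable def doubleArea (m : ℕ) (φ s : ℕ → ℝ) : ℝ :=
  ∑ j ∈ Icc 1 m, ∑ k ∈ Icc (j + 1) m, s j * s k * sin (φ k - φ j)

section Polygon

variable {m : ℕ} {φ s : ℕ → ℝ}

theorem doubleArea_eq_sum_mul_tailMoment :
    doubleArea m φ s = ∑ c ∈ Icc 1 m, s c * tailMoment m φ s c := by
  simp only [doubleArea, tailMoment, mul_sum, mul_assoc]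

theorem doubleArea_succ :
    doubleArea (m + 1) φ s =
      doubleArea m φ s + s (m + 1) * ∑ j ∈ Icc 1 m, s j * sin (φ (m + 1) - φ j) := by
  rw [doubleArea, doubleArea, sum_Icc_sum_Icc_succ_top, mul_sum]
  exact congrArg _ (sum_congr rfl fun j _ => by ring)

theorem doubleArea_congr {s' : ℕ → ℝ} (h : ∀ j ∈ Icc 1 m, s j = s' j) :
    doubleArea m φ s = doubleArea m φ s' :=
  sum_congr rfl fun j hj => sum_congr rfl fun k hk => by
    rw [h j hj, h k (by simp only [mem_Icc] at hj hk ⊢; omega)]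

theorem IsClosedPolygon.tailMoment_eq (hclose : IsClosedPolygon m φ s) {c : ℕ} (hc1 : 1 ≤ c)
    (hcm : c ≤ m) :
    tailMoment m φ s c = -∑ x ∈ Ico 1 c, s x * sin (φ x - φ c) := by
  have h := hclose (φ c)
  rw [← Ico_add_one_right_eq_Icc, ← sum_Ico_consecutive _ (by omega : 1 ≤ c) (by omega : c ≤ m + 1),
    sum_eq_sum_Ico_succ_bot (by omega : c < m + 1), sub_self, sin_zero, mul_zero, zero_add,
    Ico_add_one_right_eq_Icc] at h
  rw [tailMoment]
  linarith

theorem sin_sub_nonneg_or_sin_sub_neg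
    (hφ : ∀ j k, 1 ≤ j → j < k → k ≤ m → φ k - φ j ∈ Set.Ioo 0 (2 * π))
    {c : ℕ} (hc1 : 1 ≤ c) (hcm : c ≤ m) :
    (∀ x ∈ Icc (c + 1) m, 0 ≤ sin (φ x - φ c)) ∨ ∀ x ∈ Ico 1 c, sin (φ x - φ c) < 0 := by
  by_contra! h
  obtain ⟨⟨y, hy, hy_neg⟩, x, hx, hx_nonneg⟩ := h
  simp only [mem_Icc, mem_Ico] at hy hx
  have hyc := hφ c y hc1 (by omega) hy.2
  have hxy := hφ x y hx.1 (by omega) hy.2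
  have hxc := hφ x c hx.1 hx.2 hcm
  have hπ : π < φ y - φ c := by
    by_contra! h
    exact hy_neg.not_ge (sin_nonneg_of_nonneg_of_le_pi hyc.1.le h)
  have : 0 < sin (φ c - φ x) := sin_pos_of_pos_of_lt_pi hxc.1 (by linarith [hxy.2])
  rw [← neg_sub, sin_neg] at hx_nonneg
  linarith

theorem IsClosedPolygon.tailMoment_nonneg (hclose : IsClosedPolygon m φ s)
    (hφ : ∀ j k, 1 ≤ j → j < k → k ≤ m → φ k - φ j ∈ Set.Ioo 0 (2 * π))
    (hs : ∀ x ∈ Icc 1 m, 0 ≤ s x) {c : ℕ} (hc1 : 1 ≤ c) (hcm : c ≤ m) :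
    0 ≤ tailMoment m φ s c := by
  rcases sin_sub_nonneg_or_sin_sub_neg hφ hc1 hcm with htail | hhead
  · refine sum_nonneg fun x hx => mul_nonneg (hs x ?_) (htail x hx)
    simp only [mem_Icc] at hx ⊢; omega
  · rw [hclose.tailMoment_eq hc1 hcm, neg_nonneg]
    refine sum_nonpos fun x hx => mul_nonpos_of_nonneg_of_nonpos (hs x ?_) (hhead x hx).le
    simp only [mem_Icc, mem_Ico] at hx ⊢; omega

theorem IsClosedPolygon.tailMoment_pos (hclose : IsClosedPolygon m φ s)
    (hφ : ∀ j k, 1 ≤ j → j < k → k ≤ m → φ k - φ j ∈ Set.Ioo 0 (2 * π))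
    (hpar : ∀ j k, 1 ≤ j → j < k → k ≤ m → sin (φ k - φ j) ≠ 0)
    (hs : ∀ x ∈ Icc 1 m, 0 ≤ s x) {a b c : ℕ} (ha : 1 ≤ a) (hac : a < c) (hcb : c < b)
    (hb : b ≤ m) (hsa : 0 < s a) (hsb : 0 < s b) :
    0 < tailMoment m φ s c := by
  rcases sin_sub_nonneg_or_sin_sub_neg hφ (by omega : 1 ≤ c) (by omega : c ≤ m)
    with htail | hhead
  · have hbmem : b ∈ Icc (c + 1) m := by simp only [mem_Icc]; omega
    refine sum_pos' (fun x hx => mul_nonneg (hs x ?_) (htail x hx))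
      ⟨b, hbmem, mul_pos hsb ((htail b hbmem).lt_of_ne (hpar c b (by omega) hcb hb).symm)⟩
    simp only [mem_Icc] at hx ⊢; omega
  · have hamem : a ∈ Ico 1 c := by simp only [mem_Ico]; omega
    rw [hclose.tailMoment_eq (by omega) (by omega), neg_pos]
    refine sum_neg' (fun x hx => mul_nonpos_of_nonneg_of_nonpos (hs x ?_) (hhead x hx).le)
      ⟨a, hamem, mul_neg_of_pos_of_neg hsa (hhead a hamem)⟩
    simp only [mem_Icc, mem_Ico] at hx ⊢; omega

theorem IsClosedPolygon.exists_three_pos (hclose : IsClosedPolygon m φ s)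
    (hpar : ∀ j k, 1 ≤ j → j < k → k ≤ m → sin (φ k - φ j) ≠ 0)
    (hs : ∀ x ∈ Icc 1 m, 0 ≤ s x) (hne : ∃ x ∈ Icc 1 m, s x ≠ 0) :
    ∃ a c b, 1 ≤ a ∧ a < c ∧ c < b ∧ b ≤ m ∧ 0 < s a ∧ 0 < s c ∧ 0 < s b := by
  classical
  set K := (Icc 1 m).filter (fun x => 0 < s x)
  have hK : K.Nonempty := by
    obtain ⟨x, hx, hsx⟩ := hne
    exact ⟨x, mem_filter.2 ⟨hx, (hs x hx).lt_of_ne' hsx⟩⟩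
  obtain ⟨haI, hsa⟩ := mem_filter.1 (K.min'_mem hK)
  obtain ⟨hbI, hsb⟩ := mem_filter.1 (K.max'_mem hK)
  set a := K.min' hK
  set b := K.max' hK
  by_contra! hno
  have hzero : ∀ x ∈ Icc 1 m, x ≠ a → x ≠ b → s x = 0 := by
    intro x hx hxa hxb
    by_contra hsx
    have hxK : x ∈ K := mem_filter.2 ⟨hx, (hs x hx).lt_of_ne' hsx⟩
    have hax := (K.min'_le x hxK).lt_of_ne' hxa
    have hxb := (K.le_max' x hxK).lt_of_ne hxb
    simp only [mem_Icc] at haI hbI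
    exact (hno a x b haI.1 hax hxb hbI.2 hsa (mem_filter.1 hxK).2).not_gt hsb
  rcases (K.min'_le b (K.max'_mem hK)).eq_or_lt with hab | hab
  · have h := hclose (φ a - π / 2)
    rw [sum_eq_single_of_mem a haI fun x hx hxa => by rw [hzero x hx hxa (hab ▸ hxa), zero_mul],
      sub_sub_cancel, sin_pi_div_two, mul_one] at h
    exact hsa.ne' h
  · have h := hclose (φ a)
    rw [sum_eq_add_of_mem a b haI hbI hab.ne fun x hx hx' => by
      rw [hzero x hx hx'.1 hx'.2, zero_mul], sub_self, sin_zero, mul_zero, zero_add] at h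
    simp only [mem_Icc] at haI hbI
    exact mul_ne_zero hsb.ne' (hpar a b haI.1 hab hbI.2) h

theorem IsClosedPolygon.doubleArea_pos (hclose : IsClosedPolygon m φ s)
    (hφ : ∀ j k, 1 ≤ j → j < k → k ≤ m → φ k - φ j ∈ Set.Ioo 0 (2 * π))
    (hpar : ∀ j k, 1 ≤ j → j < k → k ≤ m → sin (φ k - φ j) ≠ 0)
    (hs : ∀ x ∈ Icc 1 m, 0 ≤ s x) (hne : ∃ x ∈ Icc 1 m, s x ≠ 0) :
    0 < doubleArea m φ s := by
  obtain ⟨a, c, b, ha, hac, hcb, hb, hsa, hsc, hsb⟩ := hclose.exists_three_pos hpar hs hne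
  rw [doubleArea_eq_sum_mul_tailMoment]
  refine sum_pos' (fun x hx => mul_nonneg (hs x hx) ?_) ⟨c, ?_, mul_pos hsc ?_⟩
  · exact hclose.tailMoment_nonneg hφ hs (mem_Icc.1 hx).1 (mem_Icc.1 hx).2
  · simp only [mem_Icc]; omega
  · exact hclose.tailMoment_pos hφ hpar hs ha hac hcb hb hsa hsb

end Polygon

theorem phiAng_succ (θ : ℕ → ℝ) (k : ℕ) : phiAng θ (k + 1) = phiAng θ k + θ (k + 1) :=
  sum_Icc_succ_top (by omega) θ

theorem phiAng_sub_mem_Ioo {N : ℕ} {θ : ℕ → ℝ} (hθ : ∀ k, 1 ≤ k → k ≤ N → 0 < θ k)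
    (hsum : ∑ k ∈ Icc 1 N, θ k = 2 * π) {j k : ℕ} (hj : 1 ≤ j) (hjk : j < k) (hk : k ≤ N) :
    phiAng θ k - phiAng θ j ∈ Set.Ioo 0 (2 * π) := by
  have hdiff : phiAng θ k - phiAng θ j = ∑ a ∈ Icc (j + 1) k, θ a := by
    simp only [phiAng, ← Ico_add_one_right_eq_Icc]
    rw [← sum_Ico_consecutive _ (by omega : 1 ≤ j + 1) (by omega : j + 1 ≤ k + 1),
      add_sub_cancel_left]
  have hpos : ∀ a ∈ Icc 1 N, 0 < θ a := fun a ha => hθ a (mem_Icc.1 ha).1 (mem_Icc.1 ha).2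
  rw [hdiff, ← hsum]
  constructor
  · exact sum_pos (fun a ha => hpos a (by simp only [mem_Icc] at ha ⊢; omega))
      ⟨k, by simp only [mem_Icc]; omega⟩
  · exact sum_lt_sum_of_subset (fun a ha => by simp only [mem_Icc] at ha ⊢; omega)
      (by simp only [mem_Icc]; omega : 1 ∈ Icc 1 N) (by simp only [mem_Icc]; omega)
      (hpos 1 (by simp only [mem_Icc]; omega)) fun a ha _ => (hpos a ha).le

section Extension

variable (n : ℕ) (θ lam : ℕ → ℝ)

theorem lamExt_of_mem {j : ℕ} (hj : j ∈ Icc 1 n) : lamExt (n + 2) θ lam j = lam j := by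
  simp only [mem_Icc] at hj
  simp only [lamExt, if_neg (by omega : j ≠ n + 2 - 1), if_neg (by omega : j ≠ n + 2)]

theorem lamExt_succ :
    lamExt (n + 2) θ lam (n + 1) = ∑ j ∈ Icc 1 n, vvec (n + 2) θ j * lam j := by
  simp [lamExt]

theorem lamExt_add_two :
    lamExt (n + 2) θ lam (n + 2) = ∑ j ∈ Icc 1 n, wvec (n + 2) θ j * lam j := by
  simp [lamExt]

theorem lamExt_neg (N : ℕ) (k : ℕ) : lamExt N θ (-lam) k = -lamExt N θ lam k := by
  simp only [lamExt, Pi.neg_apply, mul_neg, sum_neg_distrib]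
  split_ifs <;> rfl

theorem Qform_neg (N : ℕ) : Qform N θ (-lam) = Qform N θ lam := by
  simp only [Qform, Pi.neg_apply, neg_mul_neg, neg_sq]

theorem sin_eq_sin_phiAng_sub : sin (θ (n + 2)) = sin (phiAng θ (n + 2) - phiAng θ (n + 1)) := by
  rw [phiAng_succ θ (n + 1), add_sub_cancel_left]

theorem isClosedPolygon_lamExt (hS : sin (θ (n + 2)) ≠ 0) :
    IsClosedPolygon (n + 2) (phiAng θ) (lamExt (n + 2) θ lam) := by
  intro t
  rw [sum_Icc_succ_top (by omega : 1 ≤ n + 2), sum_Icc_succ_top (by omega : 1 ≤ n + 1),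
    lamExt_succ, lamExt_add_two, sum_congr rfl fun j hj => by rw [lamExt_of_mem n θ lam hj],
    sum_mul, sum_mul, ← sum_add_distrib, ← sum_add_distrib]
  refine sum_eq_zero fun j _ => ?_
  -- `sin (b - c) sin (a - t) + sin (c - a) sin (b - t) + sin (a - b) sin (c - t) = 0`
  rw [sin_eq_sin_phiAng_sub] at hS
  simp only [vvec, wvec, sin_eq_sin_phiAng_sub, show n + 2 - 1 = n + 1 from rfl]
  field_simp
  simp only [sin_sub]
  ring

theorem doubleArea_lamExt (hS : sin (θ (n + 2)) ≠ 0) :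
    doubleArea (n + 2) (phiAng θ) (lamExt (n + 2) θ lam) =
      doubleArea n (phiAng θ) lam -
        (∑ j ∈ Icc 1 n, lam j * sin (phiAng θ (n + 2) - phiAng θ j)) *
          (∑ j ∈ Icc 1 n, lam j * sin (phiAng θ (n + 1) - phiAng θ j)) / sin (θ (n + 2)) := by
  have hmid : ∀ f : ℕ → ℝ, ∑ j ∈ Icc 1 n, lamExt (n + 2) θ lam j * f j
      = ∑ j ∈ Icc 1 n, lam j * f j := fun f => sum_congr rfl fun j hj => by
    rw [lamExt_of_mem n θ lam hj]
  have hV : ∑ j ∈ Icc 1 n, vvec (n + 2) θ j * lam j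
      = -(∑ j ∈ Icc 1 n, lam j * sin (phiAng θ (n + 2) - phiAng θ j)) / sin (θ (n + 2)) := by
    simp only [vvec, neg_div, sum_div, ← sum_neg_distrib]
    exact sum_congr rfl fun j _ => by ring
  rw [doubleArea_succ, doubleArea_succ, sum_Icc_succ_top (by omega : 1 ≤ n + 1),
    doubleArea_congr fun j hj => lamExt_of_mem n θ lam hj, lamExt_succ, lamExt_add_two,
    ← sin_eq_sin_phiAng_sub]
  simp only [hmid, show n + 1 + 1 = n + 2 from rfl, hV]
  field_simp
  ring

theorem two_mul_Qform (hS : sin (θ (n + 2)) ≠ 0) :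
    2 * Qform (n + 2) θ lam =
      doubleArea n (phiAng θ) lam -
        (∑ j ∈ Icc 1 n, lam j * sin (phiAng θ (n + 2) - phiAng θ j)) *
          (∑ j ∈ Icc 1 n, lam j * sin (phiAng θ (n + 1) - phiAng θ j)) / sin (θ (n + 2)) := by
  set S := sin (θ (n + 2))
  set a := fun j => sin (phiAng θ (n + 2) - phiAng θ j)
  set b := fun j => sin (phiAng θ (n + 1) - phiAng θ j)
  have hAB : (∑ j ∈ Icc 1 n, lam j * a j) * (∑ j ∈ Icc 1 n, lam j * b j) =
      ∑ j ∈ Icc 1 n, lam j * a j * (lam j * b j) + ∑ j ∈ Icc 1 n, ∑ k ∈ Icc (j + 1) n,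
        (lam j * a j * (lam k * b k) + lam k * a k * (lam j * b j)) := by
    rw [sum_mul_sum, sum_Icc_sum_Icc_eq_sum_diag_add]
  have hdiag : ∑ j ∈ Icc 1 n, a j * b j / S * lam j ^ 2 =
      (∑ j ∈ Icc 1 n, lam j * a j * (lam j * b j)) / S := by
    rw [sum_div]; exact sum_congr rfl fun j _ => by ring
  have harea : doubleArea n (phiAng θ) lam =
      (∑ j ∈ Icc 1 n, ∑ k ∈ Icc (j + 1) n,
        (lam j * a j * (lam k * b k) + lam k * a k * (lam j * b j))) / S -
      2 * ∑ j ∈ Icc 1 n, ∑ k ∈ Icc (j + 1) n, a j * b k / S * (lam j * lam k) := by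
    rw [doubleArea, sum_div, mul_sum, ← sum_sub_distrib]
    refine sum_congr rfl fun j _ => ?_
    rw [sum_div, mul_sum, ← sum_sub_distrib]
    refine sum_congr rfl fun k _ => ?_
    -- `a k * b j - a j * b k = S * sin (φ k - φ j)`
    simp only [S, a, b, sin_eq_sin_phiAng_sub] at hS ⊢
    field_simp
    simp only [sin_sub]
    ring
  simp only [Qform, show n + 2 - 2 = n from rfl, show n + 2 - 1 = n + 1 from rfl]
  rw [hAB, harea, hdiag]
  ring

theorem two_mul_Qform_eq_doubleArea (hS : sin (θ (n + 2)) ≠ 0) :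
    2 * Qform (n + 2) θ lam = doubleArea (n + 2) (phiAng θ) (lamExt (n + 2) θ lam) := by
  rw [two_mul_Qform n θ lam hS, doubleArea_lamExt n θ lam hS]

theorem Qform_pos_of_lamExt_nonneg (hθ : ∀ k, 1 ≤ k → k ≤ n + 2 → θ k ∈ Set.Ioo 0 π)
    (hsum : ∑ k ∈ Icc 1 (n + 2), θ k = 2 * π)
    (hpar : ∀ j k, 1 ≤ j → j < k → k ≤ n + 2 → sin (phiAng θ k - phiAng θ j) ≠ 0)
    (hsupp : suppOK (n + 2) lam) (hpos : ∀ k, 1 ≤ k → k ≤ n + 2 → 0 ≤ lamExt (n + 2) θ lam k)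
    (hne : lam ≠ 0) : 0 < Qform (n + 2) θ lam := by
  have hS : 0 < sin (θ (n + 2)) := sin_pos_of_pos_of_lt_pi (hθ _ (by omega) le_rfl).1
    (hθ _ (by omega) le_rfl).2
  obtain ⟨k, hk⟩ := Function.ne_iff.1 hne
  have hkmem : k ∈ Icc 1 n := by_contra fun h => hk (hsupp k h)
  have harea := (isClosedPolygon_lamExt n θ lam hS.ne').doubleArea_pos
    (fun j k hj hjk hk => phiAng_sub_mem_Ioo (fun k h1 h2 => (hθ k h1 h2).1) hsum hj hjk hk) hpar
    (fun x hx => hpos x (mem_Icc.1 hx).1 (mem_Icc.1 hx).2)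
    ⟨k, by simp only [mem_Icc] at hkmem ⊢; omega, by rwa [lamExt_of_mem n θ lam hkmem]⟩
  linarith [two_mul_Qform_eq_doubleArea n θ lam hS.ne']

end Extension

theorem stmt7_general (N : ℕ) (θ : ℕ → ℝ)
    (hθ : ∀ k, 1 ≤ k → k ≤ N → θ k ∈ Set.Ioo 0 Real.pi)
    (hsum : ∑ k ∈ Finset.Icc 1 N, θ k = 2 * Real.pi)
    (hpar : ∀ j k, 1 ≤ j → j < k → k ≤ N → Real.sin (phiAng θ k - phiAng θ j) ≠ 0) :
    ∀ lam ∈ DeltaBar N θ, lam ≠ 0 → 0 < Qform N θ lam := by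
  rintro lam ⟨hsupp, hsign⟩ hne
  obtain ⟨n, rfl⟩ : ∃ n, N = n + 2 := by
    refine ⟨N - 2, (Nat.sub_add_cancel ?_).symm⟩
    by_contra! hN
    exact hne (funext fun k => hsupp k (by simp only [mem_Icc]; omega))
  rcases hsign with hpos | hneg
  · exact Qform_pos_of_lamExt_nonneg n θ lam hθ hsum hpar hsupp hpos hne
  · rw [← Qform_neg]
    refine Qform_pos_of_lamExt_nonneg n θ (-lam) hθ hsum hpar (fun k hk => ?_) (fun k h1 h2 => ?_)
      (neg_ne_zero.2 hne)
    · rw [Pi.neg_apply, hsupp k hk, neg_zero]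
    · rw [lamExt_neg, neg_nonneg]; exact hneg k h1 h2

/-- If no two sides of the polygon are parallel (`sin(φ_k - φ_j) ≠ 0` for all `j < k`),
then `Q` is strictly positive on `Δ̄ ∖ {0}`. -/
theorem stmt7 (N : ℕ) (hN : 5 ≤ N) (θ : ℕ → ℝ)
    (hθ : ∀ k, 1 ≤ k → k ≤ N → θ k ∈ Set.Ioo 0 Real.pi)
    (hsum : ∑ k ∈ Finset.Icc 1 N, θ k = 2 * Real.pi)
    (hpar : ∀ j k, 1 ≤ j → j < k → k ≤ N → Real.sin (phiAng θ k - phiAng θ j) ≠ 0) :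
    ∀ lam ∈ DeltaBar N θ, lam ≠ 0 → 0 < Qform N θ lam :=
  stmt7_general N θ hθ hsum hpar
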